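/- arXiv:1612.06729 — 2 statements merged into one kernel-verified Lean document; each statement's English description precedes it below -/
import Mathlib

section
/- Let t be even and suppose x₁,…,x_N ∈ M is a t-design with N = dim P_{t/2}(M). Then the reproducing kernels K_{t/2}(·, x_j), j = 1,…,N, of the space P_{t/2}(M) at the points x_j form an orthogonal basis of P_{t/2}(M), and K_{t/2}(x_j, x_j) = ‖K_{t/2}(·, x_j)‖²_{L²(μ_M)} = N for every j = 1,…,N. -/
open MeasureTheory MvPolynomial Finset RealInnerProductSpace ENNReal

noncomputable section

/-- Evaluation of a multivariate polynomial at a point of Euclidean space. -/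
def pev {n : ℕ} (P : MvPolynomial (Fin n) ℝ) (x : EuclideanSpace ℝ (Fin n)) : ℝ :=
  MvPolynomial.eval (fun i => x i) P

/-- The gradient (vector of partial derivatives) of a multivariate polynomial. -/
def pgrad {n : ℕ} (P : MvPolynomial (Fin n) ℝ) (x : EuclideanSpace ℝ (Fin n)) :
    EuclideanSpace ℝ (Fin n) :=
  WithLp.toLp 2 (fun i => pev (MvPolynomial.pderiv i P) x)

/-- A smooth, connected, compact affine algebraic manifold of dimension `d` in `ℝⁿ`,
given as the common zero set of real polynomials `p₁, …, p_r` such that at every point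
of the manifold the normal space, spanned by the gradients `∇p₁(x), …, ∇p_r(x)`, has
dimension `n - d`.  The `d`-dimensional Hausdorff measure of the manifold is positive
and finite, so that it can be normalized to a probability measure. -/
structure AlgebraicManifold (n d r : ℕ) where
  p : Fin r → MvPolynomial (Fin n) ℝ
  carrier : Set (EuclideanSpace ℝ (Fin n))
  carrier_eq : carrier = {x | ∀ j, pev (p j) x = 0}
  compact : IsCompact carrier
  connected : IsConnected carrier
  d_le_n : d ≤ n
  smooth_normal : ∀ x ∈ carrier,
    Module.finrank ℝ (Submodule.span ℝ (Set.range fun j => pgrad (p j) x)) = n - d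
  hausdorff_pos : 0 < μH[(d : ℝ)] carrier
  hausdorff_lt_top : μH[(d : ℝ)] carrier < ⊤

namespace AlgebraicManifold

variable {n d r : ℕ}

/-- The normalized `d`-dimensional Hausdorff (Lebesgue) measure `μ_M` on `M`. -/
def mu (M : AlgebraicManifold n d r) : Measure (EuclideanSpace ℝ (Fin n)) :=
  (μH[(d : ℝ)] M.carrier)⁻¹ • (μH[(d : ℝ)]).restrict M.carrier

/-- `x₁, …, x_N ∈ M` form a `t`-design on `M` if the average of `P` over the points
equals the mean of `P` over `M` for every polynomial `P` of total degree at most `t`. -/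
def IsDesign (M : AlgebraicManifold n d r) (t : ℕ) {N : ℕ}
    (x : Fin N → EuclideanSpace ℝ (Fin n)) : Prop :=
  (∀ i, x i ∈ M.carrier) ∧
  ∀ P : MvPolynomial (Fin n) ℝ, P.totalDegree ≤ t →
    (1 / N : ℝ) * ∑ i, pev P (x i) = ∫ y, pev P y ∂M.mu

end AlgebraicManifold

namespace AlgebraicManifold

variable {n d r : ℕ}

/-- `P_s(M)`: the space of restrictions to `M` of real polynomials in `n` variables of
total degree at most `s`, as a subspace of the functions on `M`. -/
def polySpace (M : AlgebraicManifold n d r) (s : ℕ) : Submodule ℝ (↥M.carrier → ℝ) :=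
  Submodule.span ℝ
    {f | ∃ P : MvPolynomial (Fin n) ℝ, P.totalDegree ≤ s ∧ f = fun (y : ↥M.carrier) => pev P y.1}

end AlgebraicManifold

/-- Tight designs: let `t = 2s` be even and let `x₁, …, x_N ∈ M` be a `t`-design with
`N = dim P_{t/2}(M)`. Then the reproducing kernels `K_{t/2}(·, x_j)` of `P_{t/2}(M)` at the
points `x_j` are pairwise orthogonal and span `P_{t/2}(M)` (hence form an orthogonal basis),
and `K_{t/2}(x_j, x_j) = ‖K_{t/2}(·, x_j)‖²_{L²(μ_M)} = N` for every `j`. The kernel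
`K s x y = K_s(x, y)` is encoded by employing that `K_s(·, x) ∈ P_s(M)` and the
reproducing property `∫_M Q(y) K_s(y, x) dμ_M(y) = Q(x)` for all `Q ∈ P_s(M)`. -/
theorem tight_design_kernels (n d r : ℕ) (M : AlgebraicManifold n d r) (s N : ℕ)
    (K : EuclideanSpace ℝ (Fin n) → EuclideanSpace ℝ (Fin n) → ℝ)
    (hKmem : ∀ x ∈ M.carrier, ∃ P : MvPolynomial (Fin n) ℝ, P.totalDegree ≤ s ∧
      ∀ y ∈ M.carrier, K x y = pev P y)
    (hKrepr : ∀ x ∈ M.carrier, ∀ Q : MvPolynomial (Fin n) ℝ, Q.totalDegree ≤ s →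
      ∫ y, pev Q y * K x y ∂M.mu = pev Q x)
    (hN : N = Module.finrank ℝ (M.polySpace s))
    (x : Fin N → EuclideanSpace ℝ (Fin n)) (hdes : M.IsDesign (2 * s) x) :
    (∀ j l, j ≠ l → ∫ y, K (x j) y * K (x l) y ∂M.mu = 0) ∧
    (∀ Q : MvPolynomial (Fin n) ℝ, Q.totalDegree ≤ s → ∃ c : Fin N → ℝ,
      ∀ y ∈ M.carrier, pev Q y = ∑ j, c j * K (x j) y) ∧
    (∀ j, K (x j) (x j) = (N : ℝ) ∧ ∫ y, (K (x j) y) ^ 2 ∂M.mu = (N : ℝ)) := by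
  obtain ⟨hxmem, hdes2⟩ := hdes
  have hmeas : MeasurableSet M.carrier := M.compact.isClosed.measurableSet
  -- integrals w.r.t. `M.mu` only depend on values on the carrier
  have hcongr : ∀ f g : EuclideanSpace ℝ (Fin n) → ℝ,
      (∀ y ∈ M.carrier, f y = g y) → ∫ y, f y ∂M.mu = ∫ y, g y ∂M.mu := by
    intro f g h
    rw [AlgebraicManifold.mu, integral_smul_measure, integral_smul_measure]
    congr 1
    exact setIntegral_congr_fun hmeas h
  -- the design identity for products of two degree-`s` polynomials
  have hprod : ∀ Q Q' : MvPolynomial (Fin n) ℝ, Q.totalDegree ≤ s → Q'.totalDegree ≤ s →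
      ∫ y, pev Q y * pev Q' y ∂M.mu = (1 / N : ℝ) * ∑ j, pev Q (x j) * pev Q' (x j) := by
    intro Q Q' hQ hQ'
    have h1 : ∀ y, pev Q y * pev Q' y = pev (Q * Q') y := fun y => by
      simp [pev, map_mul]
    have hdeg : (Q * Q').totalDegree ≤ 2 * s :=
      (MvPolynomial.totalDegree_mul Q Q').trans (by omega)
    calc ∫ y, pev Q y * pev Q' y ∂M.mu = ∫ y, pev (Q * Q') y ∂M.mu := by simp only [h1]
      _ = (1 / N : ℝ) * ∑ j, pev (Q * Q') (x j) := (hdes2 _ hdeg).symm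
      _ = (1 / N : ℝ) * ∑ j, pev Q (x j) * pev Q' (x j) := by simp only [h1]
  -- the reproducing identity for pairs of kernels
  have hKKrepr : ∀ a ∈ M.carrier, ∀ b ∈ M.carrier,
      ∫ y, K a y * K b y ∂M.mu = K a b := by
    intro a ha b hb
    obtain ⟨Pa, hPa1, hPa2⟩ := hKmem a ha
    have h2 : ∫ y, K a y * K b y ∂M.mu = ∫ y, pev Pa y * K b y ∂M.mu :=
      hcongr _ _ (fun y hy => by rw [hPa2 y hy])
    rw [h2, hKrepr b hb Pa hPa1, ← hPa2 b hb]
  -- symmetry of the kernel on the carrier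
  have hsymm : ∀ a ∈ M.carrier, ∀ b ∈ M.carrier, K a b = K b a := by
    intro a ha b hb
    have h : (fun y => K a y * K b y) = fun y => K b y * K a y := by
      funext y; ring
    rw [← hKKrepr a ha b hb, h, hKKrepr b hb a ha]
  -- the key pointwise identity on the carrier
  have key : ∀ Q : MvPolynomial (Fin n) ℝ, Q.totalDegree ≤ s → ∀ z ∈ M.carrier,
      pev Q z = (1 / N : ℝ) * ∑ j, pev Q (x j) * K (x j) z := by
    intro Q hQ z hz
    obtain ⟨Pz, hPz1, hPz2⟩ := hKmem z hz
    have h1 : ∫ y, pev Q y * K z y ∂M.mu = pev Q z := hKrepr z hz Q hQ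
    have h2 : ∫ y, pev Q y * K z y ∂M.mu = ∫ y, pev Q y * pev Pz y ∂M.mu :=
      hcongr _ _ (fun y hy => by rw [hPz2 y hy])
    rw [← h1, h2, hprod Q Pz hQ hPz1]
    congr 1
    refine Finset.sum_congr rfl fun j _ => ?_
    rw [← hPz2 _ (hxmem j), hsymm z hz (x j) (hxmem j)]
  -- the key identity, extended to all elements of `polySpace s`
  have keyV : ∀ f ∈ M.polySpace s, ∀ z, ∀ hz : z ∈ M.carrier,
      f ⟨z, hz⟩ = (1 / N : ℝ) * ∑ j, f ⟨x j, hxmem j⟩ * K (x j) z := by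
    intro f hf
    induction hf using Submodule.span_induction with
    | mem f hfmem =>
      obtain ⟨P, hP1, rfl⟩ := hfmem
      intro z hz
      exact key P hP1 z hz
    | zero => intro z hz; simp
    | add f g hfm hgm hf hg =>
      intro z hz
      simp only [Pi.add_apply, add_mul, Finset.sum_add_distrib, mul_add]
      rw [hf z hz, hg z hz]
    | smul a f hfm hf =>
      intro z hz
      simp only [Pi.smul_apply, smul_eq_mul]
      rw [hf z hz, Finset.mul_sum, Finset.mul_sum, Finset.mul_sum]
      exact Finset.sum_congr rfl fun j _ => by ring
  -- goal (2), with explicit coefficients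
  have goal2 : ∀ Q : MvPolynomial (Fin n) ℝ, Q.totalDegree ≤ s → ∃ c : Fin N → ℝ,
      ∀ y ∈ M.carrier, pev Q y = ∑ j, c j * K (x j) y := by
    intro Q hQ
    refine ⟨fun j => (1 / N : ℝ) * pev Q (x j), fun y hy => ?_⟩
    rw [key Q hQ y hy, Finset.mul_sum]
    exact Finset.sum_congr rfl fun j _ => by ring
  -- the evaluation map on `polySpace s`
  let T : M.polySpace s →ₗ[ℝ] (Fin N → ℝ) :=
    { toFun := fun f j => f.1 ⟨x j, hxmem j⟩
      map_add' := fun f g => rfl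
      map_smul' := fun a f => rfl }
  have hTinj : Function.Injective T := by
    rw [injective_iff_map_eq_zero]
    intro f hf
    have h : ∀ z, ∀ hz : z ∈ M.carrier, f.1 ⟨z, hz⟩ = 0 := by
      intro z hz
      rw [keyV f.1 f.2 z hz]
      have hz0 : ∀ j : Fin N, f.1 ⟨x j, hxmem j⟩ = 0 := fun j => congrFun hf j
      simp [hz0]
    ext ⟨z, hz⟩
    exact h z hz
  -- `polySpace s` is finite dimensional
  have hfd : FiniteDimensional ℝ (M.polySpace s) := by
    let R : MvPolynomial (Fin n) ℝ →ₗ[ℝ] (↥M.carrier → ℝ) :=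
      { toFun := fun P y => pev P y.1
        map_add' := fun P Q => by funext y; simp [pev]
        map_smul' := fun a P => by funext y; simp [pev] }
    have hle : M.polySpace s ≤
        Submodule.map R (MvPolynomial.restrictTotalDegree (Fin n) ℝ s) := by
      rw [AlgebraicManifold.polySpace, Submodule.span_le]
      rintro f ⟨P, hP, rfl⟩
      exact ⟨P, (MvPolynomial.mem_restrictTotalDegree _ _ _).mpr hP, rfl⟩
    have : FiniteDimensional ℝ
        (Submodule.map R (MvPolynomial.restrictTotalDegree (Fin n) ℝ s)) :=
      Module.Finite.map _ _
    exact Submodule.finiteDimensional_of_le hle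
  have hTsurj : Function.Surjective T := by
    have h1 : Module.finrank ℝ (M.polySpace s) = Module.finrank ℝ (Fin N → ℝ) := by
      rw [Module.finrank_pi, Fintype.card_fin, ← hN]
    exact (LinearMap.injective_iff_surjective_of_finrank_eq_finrank h1).mp hTinj
  -- the kernel Gram matrix is `N` times the identity
  have hG : ∀ j l : Fin N, K (x j) (x l) = if j = l then (N : ℝ) else 0 := by
    intro j l
    obtain ⟨f, hf⟩ := hTsurj (Pi.single j 1)
    have h1 := keyV f.1 f.2 (x l) (hxmem l)
    have h2 : ∀ m : Fin N, f.1 ⟨x m, hxmem m⟩ = (Pi.single j (1:ℝ) : Fin N → ℝ) m := fun m => by exact congrFun hf m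
    simp only [h2, Pi.single_apply, ite_mul, one_mul, zero_mul] at h1
    rw [Finset.sum_ite_eq' Finset.univ j (fun m => K (x m) (x l)),
      if_pos (Finset.mem_univ j)] at h1
    have hN0 : (N : ℝ) ≠ 0 := Nat.cast_ne_zero.mpr j.pos.ne'
    by_cases hjl : l = j
    · subst hjl
      rw [if_pos rfl] at h1
      rw [if_pos rfl]
      field_simp at h1
      linarith
    · rw [if_neg hjl] at h1
      rw [if_neg (fun h => hjl h.symm)]
      field_simp at h1
      linarith
  refine ⟨?_, goal2, ?_⟩
  · intro j l hjl
    rw [hKKrepr _ (hxmem j) _ (hxmem l), hG j l, if_neg hjl]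
  · intro j
    have hd : K (x j) (x j) = (N : ℝ) := by rw [hG j j, if_pos rfl]
    refine ⟨hd, ?_⟩
    have h : (fun y => (K (x j) y) ^ 2) = fun y => K (x j) y * K (x j) y := by
      funext y; ring
    rw [h, hKKrepr _ (hxmem j) _ (hxmem j), hd]
end
end

section
/- Let f: ℝⁿ → ℝⁿ be a continuous mapping and let Ω ⊂ ℝⁿ be an open bounded subset with boundary ∂Ω such that 0 ∈ Ω. If ⟨x, f(x)⟩ > 0 for all x ∈ ∂Ω, then there exists x ∈ Ω satisfying f(x) = 0. -/
set_option maxHeartbeats 1000000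
open Polynomial Metric Set MeasureTheory RealInnerProductSpace

private lemma coeff_prod_linear_continuous {ι : Type*} (s : Finset ι) (a : ι → ℝ) (k : ℕ) :
    Continuous fun b : ι → ℝ => (∏ i ∈ s, (C (a i) + C (b i) * X)).coeff k := by
  classical
  induction s using Finset.induction generalizing k with
  | empty => simpa using continuous_const
  | insert i s hx ih =>
    have hsplit : ∀ b : ι → ℝ, (∏ j ∈ insert i s, (C (a j) + C (b j) * X)).coeff k
        = a i * (∏ j ∈ s, (C (a j) + C (b j) * X)).coeff k
          + b i * (if k = 0 then 0 else (∏ j ∈ s, (C (a j) + C (b j) * X)).coeff (k-1)) := by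
      intro b
      rw [Finset.prod_insert hx, add_mul, coeff_add, mul_assoc, coeff_C_mul, coeff_C_mul]
      congr 1
      cases k with
      | zero => simp [coeff_zero_eq_eval_zero]
      | succ k => simp [coeff_X_mul]
    simp only [hsplit]
    refine ((continuous_const.mul (ih k)).add ((continuous_apply i).mul ?_))
    split_ifs with h
    · exact continuous_const
    · exact ih (k-1)

private lemma natDegree_prod_linear_le {ι : Type*} (s : Finset ι) (a b : ι → ℝ) :
    (∏ i ∈ s, (C (a i) + C (b i) * X)).natDegree ≤ s.card := by
  refine le_trans (natDegree_prod_le _ _) ?_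
  calc ∑ i ∈ s, (C (a i) + C (b i) * X).natDegree ≤ ∑ _i ∈ s, 1 := by
        refine Finset.sum_le_sum fun i _ => ?_
        refine le_trans (natDegree_add_le _ _) (max_le (by simp) ?_)
        exact le_trans natDegree_mul_le (by simp)
    _ = s.card := by simp

variable {n : ℕ}

private noncomputable def detPoly (M : Matrix (Fin n) (Fin n) ℝ) : ℝ[X] :=
  ((1 : Matrix (Fin n) (Fin n) ℝ[X]) + (X : ℝ[X]) • M.map C).det

private lemma detPoly_entry (M : Matrix (Fin n) (Fin n) ℝ) (i j : Fin n) :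
    ((1 : Matrix (Fin n) (Fin n) ℝ[X]) + (X : ℝ[X]) • M.map C) i j
      = C (if i = j then (1:ℝ) else 0) + C (M i j) * X := by
  rw [Matrix.add_apply, Matrix.smul_apply, Matrix.map_apply, Matrix.one_apply, smul_eq_mul,
    mul_comm, apply_ite C]
  simp

private lemma detPoly_eval (M : Matrix (Fin n) (Fin n) ℝ) (t : ℝ) :
    (detPoly M).eval t = (1 + t • M).det := by
  have := RingHom.map_det (evalRingHom t) ((1 : Matrix (Fin n) (Fin n) ℝ[X]) + (X : ℝ[X]) • M.map C)
  rw [detPoly]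
  rw [show (evalRingHom t) (((1 : Matrix (Fin n) (Fin n) ℝ[X]) + (X : ℝ[X]) • M.map C).det)
      = eval t (((1 : Matrix (Fin n) (Fin n) ℝ[X]) + (X : ℝ[X]) • M.map C).det) from rfl] at this
  rw [this]
  congr 1
  ext i j
  rw [show ((evalRingHom t).mapMatrix ((1 : Matrix (Fin n) (Fin n) ℝ[X]) + (X : ℝ[X]) • M.map C)) i j
      = eval t (((1 : Matrix (Fin n) (Fin n) ℝ[X]) + (X : ℝ[X]) • M.map C) i j) from rfl,
    detPoly_entry]
  simp only [eval_add, eval_mul, eval_C, eval_X, Matrix.add_apply, Matrix.smul_apply,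
    Matrix.one_apply, smul_eq_mul]
  rw [mul_comm]

private lemma detPoly_coeff_eq (M : Matrix (Fin n) (Fin n) ℝ) (k : ℕ) :
    (detPoly M).coeff k
      = ∑ σ : Equiv.Perm (Fin n), (Equiv.Perm.sign σ : ℤ) •
          (∏ i, (C (if σ i = i then (1:ℝ) else 0) + C (M (σ i) i) * X)).coeff k := by
  classical
  rw [detPoly, Matrix.det_apply, finset_sum_coeff]
  refine Finset.sum_congr rfl fun σ _ => ?_
  rw [coeff_smul]
  have h : (∏ i : Fin n, ((1 : Matrix (Fin n) (Fin n) ℝ[X]) + (X : ℝ[X]) • M.map C) (σ i) i)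
      = ∏ i : Fin n, (C (if σ i = i then (1:ℝ) else 0) + C (M (σ i) i) * X) :=
    Finset.prod_congr rfl fun i _ => detPoly_entry M (σ i) i
  rw [h, Units.smul_def]

private lemma detPoly_coeff_continuous (k : ℕ) :
    Continuous fun M : Matrix (Fin n) (Fin n) ℝ => (detPoly M).coeff k := by
  simp only [detPoly_coeff_eq]
  refine continuous_finset_sum _ fun σ _ => ?_
  refine (continuous_const : Continuous fun _ : Matrix (Fin n) (Fin n) ℝ =>
    ((Equiv.Perm.sign σ : ℤ))).smul (?_ : Continuous fun M : Matrix (Fin n) (Fin n) ℝ =>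
    (∏ i, (C (if σ i = i then (1:ℝ) else 0) + C (M (σ i) i) * X)).coeff k)
  exact (coeff_prod_linear_continuous (Finset.univ : Finset (Fin n))
      (fun i => if σ i = i then (1:ℝ) else 0) k).comp
    (continuous_pi fun i => (continuous_apply _).comp (continuous_apply (σ i)))

private lemma detPoly_coeff_eq_zero (M : Matrix (Fin n) (Fin n) ℝ) {k : ℕ} (hk : n < k) :
    (detPoly M).coeff k = 0 := by
  classical
  rw [detPoly_coeff_eq]
  refine Finset.sum_eq_zero fun σ _ => ?_
  have hdeg : (∏ i, (C (if σ i = i then (1:ℝ) else 0) + C (M (σ i) i) * X)).natDegree ≤ n := by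
    simpa using natDegree_prod_linear_le Finset.univ
      (fun i => if σ i = i then (1:ℝ) else 0) (fun i => M (σ i) i)
  rw [coeff_eq_zero_of_natDegree_lt (lt_of_le_of_lt hdeg hk), smul_zero]

private lemma no_smooth_retraction (hn : 0 < n) {R : ℝ} (hR : 0 < R)
    {g : EuclideanSpace ℝ (Fin n) → EuclideanSpace ℝ (Fin n)} (hg : ContDiff ℝ (⊤ : ℕ∞) g)
    (hnorm : ∀ x, ‖g x‖ = R) (hid : ∀ x, ‖x‖ = R → g x = x) : False := by
  classical
  have hone : ((⊤ : ℕ∞) : WithTop ℕ∞) ≠ 0 := WithTop.coe_ne_zero.mpr (by simp)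
  haveI : Nonempty (Fin n) := Fin.pos_iff_nonempty.mp hn
  haveI : Nontrivial (EuclideanSpace ℝ (Fin n)) := by infer_instance
  set B : Set (EuclideanSpace ℝ (Fin n)) := closedBall 0 R with hB
  have hBcomp : IsCompact B := isCompact_closedBall 0 R
  have hBconv : Convex ℝ B := convex_closedBall 0 R
  have hmeasB : MeasurableSet B := measurableSet_closedBall
  set u : EuclideanSpace ℝ (Fin n) → EuclideanSpace ℝ (Fin n) := fun x => g x - x with hu_def
  have hu : ContDiff ℝ (⊤ : ℕ∞) u := hg.sub contDiff_id
  have hudiff : Differentiable ℝ u := hu.differentiable hone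
  have hgdiff : Differentiable ℝ g := hg.differentiable hone
  set A : EuclideanSpace ℝ (Fin n) → EuclideanSpace ℝ (Fin n) →L[ℝ] EuclideanSpace ℝ (Fin n) :=
    fun x => fderiv ℝ u x with hA_def
  have hAcont : Continuous A := hu.continuous_fderiv hone
  have hu_sphere : ∀ x : EuclideanSpace ℝ (Fin n), ‖x‖ = R → u x = 0 := fun x hx => by
    simp only [hu_def]; rw [hid x hx, sub_self]
  obtain ⟨M₀, hM₀⟩ : ∃ M₀, ∀ x ∈ B, ‖A x‖ ≤ M₀ :=
    hBcomp.exists_bound_of_continuousOn hAcont.continuousOn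
  set M : ℝ := max M₀ 0 with hM_def
  have hM : ∀ x ∈ B, ‖A x‖ ≤ M := fun x hx => (hM₀ x hx).trans (le_max_left _ _)
  have hMnn : 0 ≤ M := le_max_right _ _
  set c₀ : ℝ := ‖u 0‖ with hc₀
  have hc₀nn : 0 ≤ c₀ := norm_nonneg _
  set t₀ : ℝ := min (1 / (2 * (M + 1))) (R / (2 * (c₀ + 1))) with ht₀_def
  have ht₀pos : 0 < t₀ := lt_min (by positivity) (by positivity)
  have ht₀M : ∀ t ∈ Icc (0:ℝ) t₀, t * M ≤ 1/2 := by
    intro t ht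
    have h1 : t ≤ 1 / (2 * (M + 1)) := le_trans ht.2 (min_le_left _ _)
    have h2 : t * M ≤ (1 / (2 * (M + 1))) * M := by nlinarith [ht.1]
    calc t * M ≤ (1 / (2 * (M + 1))) * M := h2
      _ ≤ 1/2 := by
          rw [div_mul_eq_mul_div, div_le_div_iff₀ (by positivity) (by norm_num)]; nlinarith
  have ht₀le1 : t₀ ≤ 1 := by
    refine le_trans (min_le_left _ _) ?_
    rw [div_le_one (by positivity)]; nlinarith
  set F : ℝ → EuclideanSpace ℝ (Fin n) → EuclideanSpace ℝ (Fin n) :=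
    fun t x => x + t • u x with hF_def
  have hFtcont : ∀ t : ℝ, Continuous (F t) :=
    fun t => continuous_id.add (hu.continuous.const_smul t)
  have hF' : ∀ (t : ℝ) (x), HasFDerivAt (F t)
      ((1 : EuclideanSpace ℝ (Fin n) →L[ℝ] EuclideanSpace ℝ (Fin n)) + t • A x) x :=
    fun t x => (hasFDerivAt_id x).add ((hudiff x).hasFDerivAt.const_smul t)
  have hFmapsto : ∀ t ∈ Icc (0:ℝ) 1, ∀ x ∈ B, F t x ∈ B := by
    intro t ht x hx
    have hxR : ‖x‖ ≤ R := by simpa [hB] using hx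
    have heq : F t x = (1 - t) • x + t • g x := by
      simp only [hF_def, hu_def, smul_sub, sub_smul, one_smul]; abel
    rw [hB, mem_closedBall, dist_zero_right, heq]
    calc ‖(1 - t) • x + t • g x‖ ≤ ‖(1 - t) • x‖ + ‖t • g x‖ := norm_add_le _ _
      _ = (1 - t) * ‖x‖ + t * ‖g x‖ := by
          rw [norm_smul, norm_smul, Real.norm_eq_abs, Real.norm_eq_abs,
            abs_of_nonneg (by linarith [ht.2]), abs_of_nonneg ht.1]
      _ ≤ (1 - t) * R + t * R := by
          have := hnorm x
          nlinarith [ht.1, ht.2, norm_nonneg x]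
      _ = R := by ring
  -- injectivity
  have hFinj : ∀ t ∈ Icc (0:ℝ) t₀, Set.InjOn (F t) B := by
    intro t ht x hx y hy hxy
    have hLip : ‖u y - u x‖ ≤ M * ‖x - y‖ := by
      rw [norm_sub_rev]
      exact Convex.norm_image_sub_le_of_norm_fderiv_le (fun z _ => hudiff z) hM hBconv hy hx
    have hsub : x - y = t • u y - t • u x :=
      sub_eq_sub_iff_add_eq_add.mpr ((hxy : x + t • u x = y + t • u y).trans (add_comm _ _))
    have hb : ‖x - y‖ ≤ t * (M * ‖x - y‖) := by
      have h1 : ‖x - y‖ ≤ t * ‖u y - u x‖ := by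
        rw [hsub, ← smul_sub]
        refine (norm_smul_le t (u y - u x)).trans ?_
        rw [Real.norm_eq_abs, abs_of_nonneg ht.1]
      exact h1.trans (mul_le_mul_of_nonneg_left hLip ht.1)
    have htM := ht₀M t ht
    have hnn : (0:ℝ) ≤ ‖x - y‖ := norm_nonneg _
    have : ‖x - y‖ ≤ 0 := by nlinarith
    exact eq_of_sub_eq_zero (norm_le_zero_iff.mp this)
  -- invertibility of the derivative
  have hunit : ∀ t ∈ Icc (0:ℝ) t₀, ∀ x ∈ B,
      IsUnit ((1 : EuclideanSpace ℝ (Fin n) →L[ℝ] EuclideanSpace ℝ (Fin n)) + t • A x) := by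
    intro t ht x hx
    have hlt : ‖-(t • A x)‖ < 1 := by
      rw [norm_neg]
      refine lt_of_le_of_lt ((norm_smul_le t (A x)).trans ?_) (by norm_num : (1:ℝ)/2 < 1)
      rw [Real.norm_eq_abs, abs_of_nonneg ht.1]
      calc t * ‖A x‖ ≤ t * M := mul_le_mul_of_nonneg_left (hM x hx) ht.1
        _ ≤ 1/2 := ht₀M t ht
    have h3 := isUnit_one_sub_of_norm_lt_one hlt
    rwa [sub_neg_eq_add] at h3
  have hdet_ne : ∀ t ∈ Icc (0:ℝ) t₀, ∀ x ∈ B,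
      ((1 : EuclideanSpace ℝ (Fin n) →L[ℝ] EuclideanSpace ℝ (Fin n)) + t • A x).det ≠ 0 := by
    intro t ht x hx
    obtain ⟨w, hw⟩ := hunit t ht x hx
    have hcomp : ((w.val : EuclideanSpace ℝ (Fin n) →L[ℝ] EuclideanSpace ℝ (Fin n)) :
          EuclideanSpace ℝ (Fin n) →ₗ[ℝ] EuclideanSpace ℝ (Fin n)).comp
        ((w.inv : EuclideanSpace ℝ (Fin n) →L[ℝ] EuclideanSpace ℝ (Fin n)) :
          EuclideanSpace ℝ (Fin n) →ₗ[ℝ] EuclideanSpace ℝ (Fin n)) = LinearMap.id := by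
      refine LinearMap.ext fun v => ?_
      rw [LinearMap.comp_apply, LinearMap.id_apply]
      show (↑w : EuclideanSpace ℝ (Fin n) →L[ℝ] EuclideanSpace ℝ (Fin n))
        ((w.inv : EuclideanSpace ℝ (Fin n) →L[ℝ] EuclideanSpace ℝ (Fin n)) v) = v
      rw [← ContinuousLinearMap.mul_apply, w.val_inv, ContinuousLinearMap.one_apply]
    have hmul : ((w.val : EuclideanSpace ℝ (Fin n) →L[ℝ] EuclideanSpace ℝ (Fin n)) :
          EuclideanSpace ℝ (Fin n) →ₗ[ℝ] EuclideanSpace ℝ (Fin n)).det *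
        ((w.inv : EuclideanSpace ℝ (Fin n) →L[ℝ] EuclideanSpace ℝ (Fin n)) :
          EuclideanSpace ℝ (Fin n) →ₗ[ℝ] EuclideanSpace ℝ (Fin n)).det = 1 := by
      rw [← LinearMap.det_comp, hcomp, LinearMap.det_id]
    have h6 : ((w.val : EuclideanSpace ℝ (Fin n) →L[ℝ] EuclideanSpace ℝ (Fin n))).det ≠ 0 :=
      left_ne_zero_of_mul_eq_one hmul
    rwa [hw] at h6
  -- positivity of det
  have hdet_pos : ∀ t ∈ Icc (0:ℝ) t₀, ∀ x ∈ B,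
      0 < ((1 : EuclideanSpace ℝ (Fin n) →L[ℝ] EuclideanSpace ℝ (Fin n)) + t • A x).det := by
    set D : ℝ × EuclideanSpace ℝ (Fin n) → ℝ := fun p =>
      ((1 : EuclideanSpace ℝ (Fin n) →L[ℝ] EuclideanSpace ℝ (Fin n)) + p.1 • A p.2).det with hD
    have hDcont : Continuous D :=
      ContinuousLinearMap.continuous_det.comp
        (continuous_const.add (continuous_fst.smul (hAcont.comp continuous_snd)))
    have hSconn : IsPreconnected ((Icc (0:ℝ) t₀) ×ˢ B) :=
      ((convex_Icc _ _).prod hBconv).isPreconnected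
    have himg : IsPreconnected (D '' ((Icc (0:ℝ) t₀) ×ˢ B)) :=
      hSconn.image D hDcont.continuousOn
    have h1mem : (1:ℝ) ∈ D '' ((Icc (0:ℝ) t₀) ×ˢ B) := by
      refine ⟨(0, 0), ⟨⟨le_rfl, ht₀pos.le⟩, mem_closedBall_self hR.le⟩, ?_⟩
      simp [hD, ContinuousLinearMap.det, ContinuousLinearMap.one_def]
    intro t ht x hx
    by_contra hle
    push_neg at hle
    have h0mem : (0:ℝ) ∈ D '' ((Icc (0:ℝ) t₀) ×ˢ B) := by
      have hDmem : D (t, x) ∈ D '' ((Icc (0:ℝ) t₀) ×ˢ B) := ⟨(t,x), ⟨ht, hx⟩, rfl⟩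
      exact himg.Icc_subset hDmem h1mem ⟨hle, by norm_num⟩
    obtain ⟨⟨s, y⟩, hsy, h0⟩ := h0mem
    exact hdet_ne s hsy.1 y hsy.2 h0
  -- surjectivity
  have hsurj : ∀ t ∈ Icc (0:ℝ) t₀, F t '' B = B := by
    intro t ht
    have himsub : F t '' B ⊆ B := by
      rintro y ⟨x, hx, rfl⟩
      exact hFmapsto t ⟨ht.1, ht.2.trans ht₀le1⟩ x hx
    have himcl : IsClosed (F t '' B) := (hBcomp.image (hFtcont t)).isClosed
    have hopen : IsOpen (ball (0 : EuclideanSpace ℝ (Fin n)) R ∩ F t '' B) := by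
      rw [isOpen_iff_mem_nhds]
      rintro y ⟨hyball, x, hxB, rfl⟩
      have hxlt : ‖x‖ < R := by
        rcases lt_or_eq_of_le (by simpa [hB] using hxB : ‖x‖ ≤ R) with h | h
        · exact h
        · exfalso
          have : F t x = x := by simp [hF_def, hu_sphere x h]
          rw [this] at hyball
          rw [mem_ball, dist_zero_right] at hyball
          exact absurd h (ne_of_lt hyball)
      set φ := (1 : EuclideanSpace ℝ (Fin n) →L[ℝ] EuclideanSpace ℝ (Fin n)) + t • A x with hφ
      have hφdet : LinearMap.det (φ : EuclideanSpace ℝ (Fin n) →ₗ[ℝ] EuclideanSpace ℝ (Fin n)) ≠ 0 :=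
        hdet_ne t ht x hxB
      set e := (LinearMap.equivOfDetNeZero _ hφdet).toContinuousLinearEquiv with he
      have hecoe : (e : EuclideanSpace ℝ (Fin n) →L[ℝ] EuclideanSpace ℝ (Fin n)) = φ := by
        apply ContinuousLinearMap.coe_injective
        ext v
        simp [he, LinearMap.equivOfDetNeZero]
      have hsmooth : ContDiff ℝ (⊤ : ℕ∞) (F t) := contDiff_id.add (hu.const_smul t)
      have hstrict : HasStrictFDerivAt (F t)
          (e : EuclideanSpace ℝ (Fin n) →L[ℝ] EuclideanSpace ℝ (Fin n)) x := by
        have h1 := hsmooth.hasStrictFDerivAt (x := x) hone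
        have h2 : fderiv ℝ (F t) x = φ := (hF' t x).fderiv
        rw [hecoe, ← h2]
        exact h1
      have hmap := hstrict.map_nhds_eq_of_equiv
      have hBnhds : B ∈ nhds x :=
        Filter.mem_of_superset (isOpen_ball.mem_nhds (by rwa [mem_ball, dist_zero_right]))
          ball_subset_closedBall
      have himg_nhds : F t '' B ∈ nhds (F t x) := by
        rw [← hmap, Filter.mem_map]
        exact Filter.mem_of_superset hBnhds (subset_preimage_image _ _)
      exact Filter.inter_mem (isOpen_ball.mem_nhds hyball) himg_nhds
    -- nonempty intersection
    have hne : (ball (0 : EuclideanSpace ℝ (Fin n)) R ∩ F t '' B).Nonempty := by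
      refine ⟨F t 0, ?_, mem_image_of_mem _ (mem_closedBall_self hR.le)⟩
      rw [mem_ball, dist_zero_right]
      have h1 : ‖F t 0‖ ≤ t * c₀ := by
        simp only [hF_def, zero_add]
        refine (norm_smul_le t (u 0)).trans ?_
        rw [Real.norm_eq_abs, abs_of_nonneg ht.1]
      have h2 : t ≤ R / (2 * (c₀ + 1)) := le_trans ht.2 (min_le_right _ _)
      refine lt_of_le_of_lt h1 ?_
      have h3 : t * c₀ ≤ (R / (2 * (c₀ + 1))) * c₀ := by nlinarith [ht.1]
      have h4 : (R / (2 * (c₀ + 1))) * c₀ < R := by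
        rw [div_mul_eq_mul_div, div_lt_iff₀ (by positivity)]
        nlinarith
      linarith
    have hball_sub : ball (0 : EuclideanSpace ℝ (Fin n)) R ⊆
        ball (0 : EuclideanSpace ℝ (Fin n)) R ∩ F t '' B := by
      have hne' : (ball (0 : EuclideanSpace ℝ (Fin n)) R ∩
          (ball (0 : EuclideanSpace ℝ (Fin n)) R ∩ F t '' B)).Nonempty := by
        obtain ⟨z, hz1, hz2⟩ := hne
        exact ⟨z, hz1, hz1, hz2⟩
      refine (convex_ball (0 : EuclideanSpace ℝ (Fin n)) R).isPreconnected.subset_of_closure_inter_subset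
        hopen hne' ?_
      intro z hz
      rcases hz with ⟨hz1, hz2⟩
      refine ⟨hz2, ?_⟩
      have : closure (ball (0 : EuclideanSpace ℝ (Fin n)) R ∩ F t '' B) ⊆ F t '' B :=
        closure_minimal (inter_subset_right) himcl
      exact this hz1
    -- conclude
    refine Subset.antisymm himsub ?_
    have h5 : B = closure (ball (0 : EuclideanSpace ℝ (Fin n)) R) := (closure_ball 0 hR.ne').symm
    have h6 : closure (ball (0 : EuclideanSpace ℝ (Fin n)) R) ⊆ F t '' B :=
      closure_minimal (fun z hz => (hball_sub hz).2) himcl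
    rw [← h5] at h6
    exact h6
  -- === endgame ===
  -- matrices
  set bE := (EuclideanSpace.basisFun (Fin n) ℝ).toBasis with hbE
  set Mx : EuclideanSpace ℝ (Fin n) → Matrix (Fin n) (Fin n) ℝ :=
    fun x => LinearMap.toMatrix bE bE
      ((A x : EuclideanSpace ℝ (Fin n) →L[ℝ] EuclideanSpace ℝ (Fin n)) :
        EuclideanSpace ℝ (Fin n) →ₗ[ℝ] EuclideanSpace ℝ (Fin n)) with hMx
  have hmat : ∀ (t : ℝ) (x : EuclideanSpace ℝ (Fin n)),
      ((1 : EuclideanSpace ℝ (Fin n) →L[ℝ] EuclideanSpace ℝ (Fin n)) + t • A x).det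
        = (1 + t • Mx x).det := by
    intro t x
    show LinearMap.det (((1 : EuclideanSpace ℝ (Fin n) →L[ℝ] EuclideanSpace ℝ (Fin n)) + t • A x :
        EuclideanSpace ℝ (Fin n) →L[ℝ] EuclideanSpace ℝ (Fin n)) :
        EuclideanSpace ℝ (Fin n) →ₗ[ℝ] EuclideanSpace ℝ (Fin n)) = _
    rw [← LinearMap.det_toMatrix bE]
    congr 1
    have hcoe : (((1 : EuclideanSpace ℝ (Fin n) →L[ℝ] EuclideanSpace ℝ (Fin n)) + t • A x :
        EuclideanSpace ℝ (Fin n) →L[ℝ] EuclideanSpace ℝ (Fin n)) :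
        EuclideanSpace ℝ (Fin n) →ₗ[ℝ] EuclideanSpace ℝ (Fin n))
        = LinearMap.id + t • ((A x : EuclideanSpace ℝ (Fin n) →L[ℝ] EuclideanSpace ℝ (Fin n)) :
          EuclideanSpace ℝ (Fin n) →ₗ[ℝ] EuclideanSpace ℝ (Fin n)) := rfl
    rw [hcoe, map_add, _root_.map_smul, LinearMap.toMatrix_id]
  have hMxcont : Continuous Mx := by
    refine continuous_matrix fun i j => ?_
    have hform : ∀ x : EuclideanSpace ℝ (Fin n), Mx x i j = (bE.coord i) ((A x) (bE j)) := by
      intro x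
      simp only [hMx, LinearMap.toMatrix_apply, Module.Basis.coord_apply, ContinuousLinearMap.coe_coe]
    simp only [hform]
    exact ((bE.coord i).continuous_of_finiteDimensional).comp
      ((ContinuousLinearMap.apply ℝ (EuclideanSpace ℝ (Fin n)) (bE j)).continuous.comp hAcont)
  -- measure facts
  have hμpos : 0 < volume B := measure_closedBall_pos _ _ hR
  have hμfin : volume B ≠ ⊤ := hBcomp.measure_lt_top.ne
  set c : ℝ := (volume B).toReal with hcdef
  have hcpos : 0 < c := ENNReal.toReal_pos hμpos.ne' hμfin
  -- integrability of coefficients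
  have hintegr : ∀ k : ℕ, IntegrableOn (fun x => (detPoly (Mx x)).coeff k) B volume :=
    fun k => ContinuousOn.integrableOn_compact hBcomp
      (((detPoly_coeff_continuous k).comp hMxcont).continuousOn)
  set a : ℕ → ℝ := fun k => ∫ x in B, (detPoly (Mx x)).coeff k with ha
  set p : ℝ[X] := ∑ k ∈ Finset.range (n+1), C (a k) * X^k with hp
  have hdegMx : ∀ x : EuclideanSpace ℝ (Fin n), (detPoly (Mx x)).natDegree < n + 1 := fun x =>
    Nat.lt_succ_of_le (natDegree_le_iff_coeff_eq_zero.mpr fun N hN => detPoly_coeff_eq_zero _ hN)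
  have hevalp : ∀ t : ℝ, eval t p = ∫ x in B, eval t (detPoly (Mx x)) := by
    intro t
    have h1 : ∀ x : EuclideanSpace ℝ (Fin n), eval t (detPoly (Mx x))
        = ∑ k ∈ Finset.range (n+1), (detPoly (Mx x)).coeff k * t^k :=
      fun x => eval_eq_sum_range' (hdegMx x) t
    simp only [h1]
    rw [MeasureTheory.integral_finset_sum _ (fun k _ => (hintegr k).mul_const (t^k))]
    simp only [hp, eval_finset_sum, eval_mul, eval_C, eval_pow, eval_X]
    refine Finset.sum_congr rfl fun k _ => ?_
    rw [MeasureTheory.integral_mul_const]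
  -- the continuous integrand
  have hDxcont : ∀ t : ℝ, Continuous fun x : EuclideanSpace ℝ (Fin n) =>
      eval t (detPoly (Mx x)) := by
    intro t
    have heq : (fun x : EuclideanSpace ℝ (Fin n) => eval t (detPoly (Mx x)))
        = fun x => ((1 : EuclideanSpace ℝ (Fin n) →L[ℝ] EuclideanSpace ℝ (Fin n)) + t • A x).det :=
      funext fun x => by rw [detPoly_eval, ← hmat]
    rw [heq]
    exact ContinuousLinearMap.continuous_det.comp (continuous_const.add (hAcont.const_smul t))
  -- change of variables: for each admissible t, the integral equals c
  have hIt : ∀ t ∈ Icc (0:ℝ) t₀, (∫ x in B, eval t (detPoly (Mx x))) = c := by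
    intro t ht
    have hfd : ∀ x ∈ B, HasFDerivWithinAt (F t)
        ((1 : EuclideanSpace ℝ (Fin n) →L[ℝ] EuclideanSpace ℝ (Fin n)) + t • A x) B x :=
      fun x _ => (hF' t x).hasFDerivWithinAt
    have hch := lintegral_abs_det_fderiv_eq_addHaar_image volume hmeasB hfd (hFinj t ht)
    rw [hsurj t ht] at hch
    have habs : ∀ x ∈ B, ENNReal.ofReal
        |((1 : EuclideanSpace ℝ (Fin n) →L[ℝ] EuclideanSpace ℝ (Fin n)) + t • A x).det|
        = ENNReal.ofReal (eval t (detPoly (Mx x))) := by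
      intro x hx
      rw [abs_of_pos (hdet_pos t ht x hx), detPoly_eval, ← hmat t x]
    rw [setLIntegral_congr_fun hmeasB habs] at hch
    have hnonneg : (0 : EuclideanSpace ℝ (Fin n) → ℝ) ≤ᵐ[volume.restrict B]
        fun x => eval t (detPoly (Mx x)) := by
      refine (ae_restrict_iff' hmeasB).2 (Filter.Eventually.of_forall fun x hx => ?_)
      show (0:ℝ) ≤ eval t (detPoly (Mx x))
      rw [detPoly_eval, ← hmat t x]
      exact (hdet_pos t ht x hx).le
    have hbo := MeasureTheory.integral_eq_lintegral_of_nonneg_ae hnonneg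
      ((hDxcont t).aestronglyMeasurable.restrict)
    rw [hbo, hch]
  -- at t = 1 the integrand vanishes identically
  have hzero : ∀ x : EuclideanSpace ℝ (Fin n),
      ((1 : EuclideanSpace ℝ (Fin n) →L[ℝ] EuclideanSpace ℝ (Fin n)) + (1:ℝ) • A x).det = 0 := by
    intro x
    have hF1 : F 1 = g := funext fun y => by simp [hF_def, hu_def]
    have hg' : HasFDerivAt g
        ((1 : EuclideanSpace ℝ (Fin n) →L[ℝ] EuclideanSpace ℝ (Fin n)) + (1:ℝ) • A x) x := by
      have := hF' 1 x; rwa [hF1] at this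
    have hinner := hg'.inner ℝ hg'
    have hconstf : (fun y : EuclideanSpace ℝ (Fin n) => (⟪g y, g y⟫ : ℝ)) = fun _ => R * R :=
      funext fun y => by rw [real_inner_self_eq_norm_mul_norm, hnorm y]
    rw [hconstf] at hinner
    have h0 := hinner.unique (hasFDerivAt_const (R*R) x)
    by_contra hdz
    have hdzL : LinearMap.det
        (((1 : EuclideanSpace ℝ (Fin n) →L[ℝ] EuclideanSpace ℝ (Fin n)) + (1:ℝ) • A x :
          EuclideanSpace ℝ (Fin n) →L[ℝ] EuclideanSpace ℝ (Fin n)) :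
          EuclideanSpace ℝ (Fin n) →ₗ[ℝ] EuclideanSpace ℝ (Fin n)) ≠ 0 := hdz
    set e := LinearMap.equivOfDetNeZero _ hdzL with he
    have hecoe : (e : EuclideanSpace ℝ (Fin n) →ₗ[ℝ] EuclideanSpace ℝ (Fin n))
        = (((1 : EuclideanSpace ℝ (Fin n) →L[ℝ] EuclideanSpace ℝ (Fin n)) + (1:ℝ) • A x :
          EuclideanSpace ℝ (Fin n) →L[ℝ] EuclideanSpace ℝ (Fin n)) :
          EuclideanSpace ℝ (Fin n) →ₗ[ℝ] EuclideanSpace ℝ (Fin n)) :=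
      LinearEquiv.coe_ofIsUnitDet _
    set v := e.symm (g x) with hv
    have happ : ((1 : EuclideanSpace ℝ (Fin n) →L[ℝ] EuclideanSpace ℝ (Fin n)) + (1:ℝ) • A x) v
        = g x := by
      have h1 : ((1 : EuclideanSpace ℝ (Fin n) →L[ℝ] EuclideanSpace ℝ (Fin n)) + (1:ℝ) • A x) v
          = e v := (DFunLike.congr_fun hecoe v).symm
      rw [h1, hv, e.apply_symm_apply]
    have hv0 := DFunLike.congr_fun h0 v
    simp only [ContinuousLinearMap.comp_apply, ContinuousLinearMap.prod_apply,
      fderivInnerCLM_apply, ContinuousLinearMap.zero_apply] at hv0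
    rw [happ] at hv0
    have hinner0 : (⟪g x, g x⟫ : ℝ) = 0 := by
      have := real_inner_comm (g x) (g x)
      linarith [hv0]
    rw [real_inner_self_eq_norm_mul_norm, hnorm x] at hinner0
    nlinarith
  have hfinal0 : eval 1 p = 0 := by
    rw [hevalp 1]
    have hzz : ∀ x : EuclideanSpace ℝ (Fin n), eval 1 (detPoly (Mx x)) = 0 := fun x => by
      rw [detPoly_eval, ← hmat 1 x, hzero x]
    simp only [hzz, integral_zero]
  -- p is the constant polynomial c
  have hq0 : p - C c = 0 := by
    refine eq_zero_of_infinite_isRoot _ (Set.Infinite.mono ?_ (Set.Icc_infinite ht₀pos))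
    intro t htmem
    simp only [Set.mem_setOf_eq, IsRoot, eval_sub, eval_C]
    rw [hevalp t, hIt t htmem, sub_self]
  have hpc : p = C c := by rwa [sub_eq_zero] at hq0
  rw [hpc, eval_C] at hfinal0
  exact absurd hfinal0 hcpos.ne'

private lemma no_continuous_nonvanishing {n : ℕ} (hn : 0 < n)
    {F : EuclideanSpace ℝ (Fin n) → EuclideanSpace ℝ (Fin n)} (hF : Continuous F)
    (hne : ∀ x, F x ≠ 0) {R₀ : ℝ} (hR₀ : 1 ≤ R₀)
    (hid : ∀ x, R₀ ≤ ‖x‖ → F x = x) : False := by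
  classical
  set R : ℝ := R₀ + 2 with hRdef
  have hRpos : 0 < R := by linarith
  -- minimum of ‖F‖ on a big ball
  obtain ⟨x₀, hx₀mem, hx₀min⟩ :=
    (isCompact_closedBall (0 : EuclideanSpace ℝ (Fin n)) (R+2)).exists_isMinOn
      (nonempty_closedBall.2 (by linarith)) (hF.norm.continuousOn)
  set m : ℝ := ‖F x₀‖ with hm
  have hmpos : 0 < m := norm_pos_iff.2 (hne x₀)
  have hmle : ∀ x : EuclideanSpace ℝ (Fin n), ‖x‖ ≤ R + 2 → m ≤ ‖F x‖ := fun x hx =>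
    hx₀min (by simpa [Metric.mem_closedBall, dist_zero_right] using hx)
  -- uniform continuity on a big ball
  have hucont := (isCompact_closedBall (0 : EuclideanSpace ℝ (Fin n)) (R+3)).uniformContinuousOn_of_continuous
    hF.continuousOn
  rw [Metric.uniformContinuousOn_iff] at hucont
  obtain ⟨d, hdpos, hd⟩ := hucont (m/2) (by positivity)
  set d' : ℝ := min d 1 with hd'def
  have hd'pos : 0 < d' := lt_min hdpos one_pos
  -- mollifier
  set φ : ContDiffBump (0 : EuclideanSpace ℝ (Fin n)) :=
    ⟨d'/2, d', by positivity, by linarith⟩ with hφdef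
  set G₀ := MeasureTheory.convolution (φ.normed volume) F
    (ContinuousLinearMap.lsmul ℝ ℝ) volume with hG₀def
  have hG₀smooth : ContDiff ℝ (⊤ : ℕ∞) G₀ :=
    HasCompactSupport.contDiff_convolution_left _ φ.hasCompactSupport_normed
      φ.contDiff_normed (hF.locallyIntegrable)
  have hG₀close : ∀ x : EuclideanSpace ℝ (Fin n), ‖x‖ ≤ R + 1 →
      dist (G₀ x) (F x) ≤ m/2 := by
    intro x hx
    refine φ.dist_normed_convolution_le hF.aestronglyMeasurable ?_
    intro y hy
    have hyx : dist y x < d' := by simpa [Metric.mem_ball] using hy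
    have hyR : ‖y‖ ≤ R + 3 := by
      have := norm_sub_norm_le y x
      have : ‖y‖ ≤ ‖x‖ + dist y x := by
        rw [dist_eq_norm] at *
        linarith [norm_sub_norm_le y x]
      have hd'le : d' ≤ 1 := min_le_right _ _
      linarith
    refine le_of_lt (hd y (by simpa [Metric.mem_closedBall, dist_zero_right] using hyR)
      x (by simp only [Metric.mem_closedBall, dist_zero_right]; linarith) ?_)
    exact lt_of_lt_of_le hyx (min_le_left _ _)
  -- cutoff
  set ψ : ContDiffBump (0 : EuclideanSpace ℝ (Fin n)) :=
    ⟨R₀, R₀ + 1, by linarith, by linarith⟩ with hψdef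
  set G : EuclideanSpace ℝ (Fin n) → EuclideanSpace ℝ (Fin n) :=
    fun x => x + ψ x • (G₀ x - x) with hGdef
  have hGsmooth : ContDiff ℝ (⊤ : ℕ∞) G :=
    contDiff_id.add (ψ.contDiff.smul (hG₀smooth.sub contDiff_id))
  have hGeqid : ∀ x : EuclideanSpace ℝ (Fin n), R₀ + 1 ≤ ‖x‖ → G x = x := by
    intro x hx
    have hψ0 : ψ x = 0 := ψ.zero_of_le_dist (by rwa [dist_zero_right])
    simp [hGdef, hψ0]
  have hGclose : ∀ x : EuclideanSpace ℝ (Fin n), ‖x‖ ≤ R + 1 → ‖G x - F x‖ ≤ m/2 := by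
    intro x hx
    by_cases hcase : ‖x‖ ≤ R₀
    · have hψ1 : ψ x = 1 := ψ.one_of_mem_closedBall (by rwa [Metric.mem_closedBall, dist_zero_right])
      have : G x = G₀ x := by simp [hGdef, hψ1]
      rw [this, ← dist_eq_norm]
      exact hG₀close x hx
    · push_neg at hcase
      have hFx : F x = x := hid x hcase.le
      have : G x - F x = ψ x • (G₀ x - F x) := by rw [hFx]; simp [hGdef]
      rw [this]
      refine (norm_smul_le _ _).trans ?_
      have h1 : ‖(ψ x : ℝ)‖ ≤ 1 := by
        rw [Real.norm_eq_abs, abs_of_nonneg ψ.nonneg]; exact ψ.le_one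
      have h2 : ‖G₀ x - F x‖ ≤ m/2 := by rw [← dist_eq_norm]; exact hG₀close x hx
      nlinarith [norm_nonneg (G₀ x - F x)]
  have hGne : ∀ x : EuclideanSpace ℝ (Fin n), G x ≠ 0 := by
    intro x
    by_cases hcase : ‖x‖ ≤ R + 1
    · have h1 := hGclose x hcase
      have h2 : m ≤ ‖F x‖ := hmle x (by linarith)
      intro h0
      rw [h0, zero_sub, norm_neg] at h1
      linarith
    · push_neg at hcase
      have := hGeqid x (by linarith)
      rw [this]
      intro h0
      rw [h0, norm_zero] at hcase
      linarith
  -- normalization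
  set g : EuclideanSpace ℝ (Fin n) → EuclideanSpace ℝ (Fin n) :=
    fun x => (R * ‖G x‖⁻¹) • G x with hgdef
  have hgsmooth : ContDiff ℝ (⊤ : ℕ∞) g := by
    rw [contDiff_iff_contDiffAt]
    intro x
    have hnormx : ContDiffAt ℝ (⊤ : ℕ∞) (fun y => ‖G y‖) x :=
      ContDiffAt.norm ℝ hGsmooth.contDiffAt (hGne x)
    exact (contDiffAt_const.mul (hnormx.inv (norm_ne_zero_iff.2 (hGne x)))).smul
      hGsmooth.contDiffAt
  have hgnorm : ∀ x, ‖g x‖ = R := by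
    intro x
    rw [hgdef]
    simp only []
    rw [norm_smul, Real.norm_eq_abs, abs_of_nonneg (by positivity), mul_assoc,
      inv_mul_cancel₀ (norm_ne_zero_iff.2 (hGne x)), mul_one]
  have hgid : ∀ x : EuclideanSpace ℝ (Fin n), ‖x‖ = R → g x = x := by
    intro x hx
    have hGx : G x = x := hGeqid x (by rw [hx]; linarith)
    rw [hgdef]
    simp only []
    rw [hGx, hx, mul_inv_cancel₀ hRpos.ne', one_smul]
  exact no_smooth_retraction hn hRpos hgsmooth hgnorm hgid

/-- Brouwer degree theory consequence: if `f : ℝⁿ → ℝⁿ` is continuous, `Ω ⊆ ℝⁿ` is open and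
bounded with `0 ∈ Ω`, and `⟨x, f(x)⟩ > 0` for all `x` in the boundary `∂Ω`, then there exists
`x ∈ Ω` with `f(x) = 0`. -/
theorem exists_zero_of_inner_pos_on_boundary (n : ℕ)
    (f : EuclideanSpace ℝ (Fin n) → EuclideanSpace ℝ (Fin n)) (hf : Continuous f)
    (Ω : Set (EuclideanSpace ℝ (Fin n))) (hopen : IsOpen Ω)
    (hbdd : Bornology.IsBounded Ω) (h0 : (0 : EuclideanSpace ℝ (Fin n)) ∈ Ω)
    (hbdry : ∀ x ∈ frontier Ω, 0 < ⟪x, f x⟫) :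
    ∃ x ∈ Ω, f x = 0 := by
  classical
  rcases Nat.eq_zero_or_pos n with hn0 | hn
  · subst hn0
    exact ⟨0, h0, Subsingleton.elim _ _⟩
  by_contra hcon
  push_neg at hcon
  set K : Set (EuclideanSpace ℝ (Fin n)) := closure Ω with hK
  have hKcomp : IsCompact K := hbdd.isCompact_closure
  have hKne : K.Nonempty := ⟨0, subset_closure h0⟩
  have hKcl : IsClosed K := isClosed_closure
  have hKeq : K = Ω ∪ frontier Ω := closure_eq_self_union_frontier Ω
  have hfne : ∀ x ∈ K, f x ≠ 0 := by
    intro x hx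
    rw [hKeq] at hx
    rcases hx with hx | hx
    · exact hcon x hx
    · intro h0'
      have := hbdry x hx
      rw [h0'] at this
      simp at this
  -- the open set where the inner product is positive
  set U : Set (EuclideanSpace ℝ (Fin n)) := {x | 0 < ⟪x, f x⟫} with hU
  have hUopen : IsOpen U := isOpen_lt continuous_const (continuous_id.inner hf)
  have hKU : K ⊆ Ω ∪ U := by
    rw [hKeq]
    intro x hx
    rcases hx with hx | hx
    · exact Or.inl hx
    · exact Or.inr (hbdry x hx)
  obtain ⟨δ, hδpos, hδ⟩ := hKcomp.exists_thickening_subset_open (hopen.union hUopen) hKU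
  -- bound for K
  obtain ⟨R₁, hR₁⟩ := hKcomp.isBounded.subset_closedBall 0
  have hR₁' : ∀ x ∈ K, ‖x‖ ≤ R₁ := fun x hx => by
    have := hR₁ hx; rwa [Metric.mem_closedBall, dist_zero_right] at this
  set R₀ : ℝ := max (R₁ + δ) 1 with hR₀def
  -- interpolation
  set lam : EuclideanSpace ℝ (Fin n) → ℝ := fun x => min 1 (Metric.infDist x K / δ) with hlam
  have hlamcont : Continuous lam :=
    continuous_const.min ((Metric.continuous_infDist_pt K).div_const δ)
  have hlamnn : ∀ x, 0 ≤ lam x := fun x =>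
    le_min zero_le_one (div_nonneg Metric.infDist_nonneg hδpos.le)
  have hlamle1 : ∀ x, lam x ≤ 1 := fun x => min_le_left _ _
  set Fv : EuclideanSpace ℝ (Fin n) → EuclideanSpace ℝ (Fin n) :=
    fun x => (1 - lam x) • f x + lam x • x with hFv
  have hFvcont : Continuous Fv :=
    ((continuous_const.sub hlamcont).smul hf).add (hlamcont.smul continuous_id)
  have hFvne : ∀ x, Fv x ≠ 0 := by
    intro x
    by_cases hxK : x ∈ K
    · have hl0 : lam x = 0 := by
        simp [hlam, Metric.infDist_zero_of_mem hxK]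
      simp only [hFv, hl0, sub_zero, one_smul, zero_smul, add_zero]
      exact hfne x hxK
    · have hdpos : 0 < Metric.infDist x K := (hKcl.notMem_iff_infDist_pos hKne).1 hxK
      have hx0 : x ≠ 0 := fun h => hxK (h ▸ subset_closure h0)
      by_cases hcase : Metric.infDist x K < δ
      · -- x is in the thickening, hence in Ω ∪ U, hence in U
        have hxthick : x ∈ Metric.thickening δ K := by
          rw [Metric.mem_thickening_iff]
          exact (Metric.infDist_lt_iff hKne).1 hcase
        have hxU : x ∈ U := by
          rcases hδ hxthick with hx | hx
          · exact absurd (subset_closure hx) hxK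
          · exact hx
        have hip : 0 < ⟪x, f x⟫ := hxU
        have hlpos : 0 < lam x := lt_min one_pos (div_pos hdpos hδpos)
        have hinner : 0 < ⟪x, Fv x⟫ := by
          simp only [hFv]
          rw [inner_add_right, real_inner_smul_right, real_inner_smul_right,
            real_inner_self_eq_norm_mul_norm]
          have h1 : 0 ≤ (1 - lam x) * ⟪x, f x⟫ :=
            mul_nonneg (by linarith [hlamle1 x]) hip.le
          have h2 : 0 < lam x * (‖x‖ * ‖x‖) :=
            mul_pos hlpos (by
              have : 0 < ‖x‖ := norm_pos_iff.2 hx0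
              positivity)
          linarith
        intro h0'
        rw [h0', inner_zero_right] at hinner
        exact lt_irrefl _ hinner
      · push_neg at hcase
        have hl1 : lam x = 1 := by
          simp only [hlam]
          rw [min_eq_left]
          rw [le_div_iff₀ hδpos]
          linarith
        simp only [hFv, hl1, sub_self, zero_smul, one_smul, zero_add]
        exact hx0
  have hFvid : ∀ x : EuclideanSpace ℝ (Fin n), R₀ ≤ ‖x‖ → Fv x = x := by
    intro x hx
    have hxd : δ ≤ Metric.infDist x K := by
      by_contra hlt
      push_neg at hlt
      obtain ⟨y, hyK, hyd⟩ := (Metric.infDist_lt_iff hKne).1 hlt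
      have h1 : ‖x‖ - ‖y‖ ≤ dist x y := by
        rw [dist_eq_norm]; exact norm_sub_norm_le x y
      have h2 : ‖y‖ ≤ R₁ := hR₁' y hyK
      have h3 : R₁ + δ ≤ ‖x‖ := le_trans (le_max_left _ _) hx
      linarith
    have hl1 : lam x = 1 := by
      simp only [hlam]
      rw [min_eq_left]
      rw [le_div_iff₀ hδpos]
      linarith
    simp only [hFv, hl1, sub_self, zero_smul, one_smul, zero_add]
  exact absurd (no_continuous_nonvanishing hn hFvcont hFvne (le_max_right _ _) hFvid) id
end
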